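/- In the ring of formal power series ℤ⟦t⟧, the generating function 𝑀(t) = \sum_{n ≥ 0} M_n t^n of the Motzkin numbers satisfies 𝑀(t) = 1 + t\,𝑀(t) + t^2\,𝑀(t)^2. -/

import Mathlib

/-- The number of Motzkin paths of length `k` and rank `r`: sequences of `k` steps, each
in `{-1, 0, 1}` (encoded via `Fin 3`, with step value `(a i : ℤ) - 1`), all of whose
partial sums are nonnegative, with total sum `r`. -/
def motzkinCount (k : ℕ) (r : ℤ) : ℕ :=
  (Finset.univ.filter (fun a : Fin k → Fin 3 =>
    (∀ s : ℕ, s ≤ k → 0 ≤ ∑ i : Fin k, if (i : ℕ) < s then ((a i : ℤ) - 1) else 0) ∧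
    (∑ i : Fin k, ((a i : ℤ) - 1)) = r)).card

namespace MotzkinAux

open PowerSeries

/-- Partial sum of the first `s` steps. -/
def ps {k : ℕ} (a : Fin k → Fin 3) (s : ℕ) : ℤ :=
  ∑ i : Fin k, if (i : ℕ) < s then ((a i : ℤ) - 1) else 0

/-- Path of length `k` starting at height `h`, staying nonnegative, ending at `0`. -/
def P (h : ℤ) {k : ℕ} (a : Fin k → Fin 3) : Prop :=
  (∀ s : ℕ, s ≤ k → 0 ≤ h + ps a s) ∧ h + ps a k = 0

instance {k : ℕ} (h : ℤ) (a : Fin k → Fin 3) : Decidable (P h a) := by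
  unfold P; infer_instance

/-- The count of such paths. -/
def c (k : ℕ) (h : ℤ) : ℕ :=
  (Finset.univ.filter (fun a : Fin k → Fin 3 => P h a)).card

lemma ps_zero {k : ℕ} (a : Fin k → Fin 3) : ps a 0 = 0 := by
  simp [ps]

lemma ps_cons {k : ℕ} (x : Fin 3) (a : Fin k → Fin 3) (s : ℕ) :
    ps (Fin.cons x a) (s + 1) = ((x : ℤ) - 1) + ps a s := by
  simp [ps, Fin.sum_univ_succ, Nat.succ_lt_succ_iff]

lemma ps_length {k : ℕ} (a : Fin k → Fin 3) : ps a k = ∑ i, ((a i : ℤ) - 1) :=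
  Finset.sum_congr rfl fun i _ => if_pos i.isLt

lemma P_cons {k : ℕ} (h : ℤ) (x : Fin 3) (a : Fin k → Fin 3) :
    P h (Fin.cons x a) ↔ 0 ≤ h ∧ P (h + ((x : ℤ) - 1)) a := by
  constructor
  · rintro ⟨hs, ht⟩
    refine ⟨by simpa [ps_zero] using hs 0 (Nat.zero_le _), fun s hsk => ?_, ?_⟩
    · have := hs (s + 1) (by omega)
      rw [ps_cons] at this; linarith
    · rw [ps_cons] at ht; linarith
  · rintro ⟨h0, hs, ht⟩
    constructor
    · intro s hsk
      cases s with
      | zero => simpa [ps_zero] using h0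
      | succ t =>
        have := hs t (by omega)
        rw [ps_cons]; linarith
    · rw [ps_cons]; linarith

lemma c_neg (k : ℕ) (h : ℤ) (hh : h < 0) : c k h = 0 := by
  rw [c, Finset.card_eq_zero, Finset.filter_eq_empty_iff]
  rintro a - ⟨hs, -⟩
  have := hs 0 (Nat.zero_le _)
  rw [ps_zero] at this; linarith

lemma c_zero (h : ℤ) : c 0 h = if h = 0 then 1 else 0 := by
  have hp : ∀ a : Fin 0 → Fin 3, P h a ↔ h = 0 := by
    intro a
    constructor
    · rintro ⟨-, ht⟩; rw [ps_zero] at ht; linarith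
    · intro h0
      exact ⟨fun s _ => by simp [ps, h0], by simp [ps, h0]⟩
  rw [c, Finset.filter_congr (fun a _ => by rw [hp a]), Finset.filter_const]
  split_ifs <;> simp

lemma c_succ (k : ℕ) (h : ℤ) (hh : 0 ≤ h) :
    c (k + 1) h = c k (h + 1) + c k h + c k (h - 1) := by
  have key : ∀ p : Fin 3 × (Fin k → Fin 3),
      P (h + ((p.1 : ℤ) - 1)) p.2 ↔ P h (Fin.consEquiv (fun _ => Fin 3) p) := by
    rintro ⟨x, a⟩
    show P (h + ((x : ℤ) - 1)) a ↔ P h (Fin.cons x a)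
    rw [P_cons]
    simp [hh]
  have e : {p : Fin 3 × (Fin k → Fin 3) // P (h + ((p.1 : ℤ) - 1)) p.2} ≃
      {a : Fin (k + 1) → Fin 3 // P h a} :=
    (Fin.consEquiv (fun _ => Fin 3)).subtypeEquiv key
  have e2 : {p : Fin 3 × (Fin k → Fin 3) // P (h + ((p.1 : ℤ) - 1)) p.2} ≃
      Σ x : Fin 3, {a : Fin k → Fin 3 // P (h + ((x : ℤ) - 1)) a} :=
    Equiv.subtypeProdEquivSigmaSubtype (fun (x : Fin 3) (a : Fin k → Fin 3) => P (h + ((x : ℤ) - 1)) a)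
  have hcard : c (k + 1) h =
      ∑ x : Fin 3, Fintype.card {a : Fin k → Fin 3 // P (h + ((x : ℤ) - 1)) a} := by
    rw [c, ← Fintype.card_subtype, ← Fintype.card_congr e, Fintype.card_congr e2,
      Fintype.card_sigma]
  rw [hcard, Fin.sum_univ_three]
  have hc : ∀ h' : ℤ, Fintype.card {a : Fin k → Fin 3 // P h' a} = c k h' := by
    intro h'; rw [c, Fintype.card_subtype]
  rw [hc, hc, hc]
  have e0 : ((0 : Fin 3) : ℤ) = 0 := rfl
  have e1 : ((1 : Fin 3) : ℤ) = 1 := rfl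
  have e2' : ((2 : Fin 3) : ℤ) = 2 := rfl
  rw [e0, e1, e2']
  rw [show h + ((0 : ℤ) - 1) = h - 1 by ring, show h + ((1 : ℤ) - 1) = h by ring,
    show h + ((2 : ℤ) - 1) = h + 1 by ring]
  ring

/-- The generating function of paths starting at height `h`. -/
noncomputable def F (h : ℤ) : PowerSeries ℤ := PowerSeries.mk fun k => (c k h : ℤ)

lemma F_rec (h : ℤ) (hh : 0 ≤ h) :
    F h = C (if h = 0 then 1 else 0) + X * (F (h + 1) + F h + F (h - 1)) := by
  ext k
  cases k with
  | zero =>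
    simp only [F, coeff_zero_eq_constantCoeff, map_add, map_mul, constantCoeff_X,
      zero_mul, add_zero, constantCoeff_C, constantCoeff_mk, c_zero]
    split_ifs <;> simp
  | succ n =>
    rw [map_add, coeff_succ_X_mul, coeff_C, if_neg (Nat.succ_ne_zero n), zero_add,
      map_add, map_add]
    simp only [F, coeff_mk]
    rw [c_succ n h hh]
    push_cast
    ring

lemma F_neg : F (-1) = 0 := by
  ext k
  simp [F, c_neg k (-1) (by norm_num)]

lemma F_rec' (h : ℤ) (hh : 1 ≤ h) :
    F h = X * (F (h + 1) + F h + F (h - 1)) := by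
  have := F_rec h (by linarith)
  rw [if_neg (by omega), map_zero, zero_add] at this
  exact this

lemma F_rec0 : F 0 = 1 + X * (F 1 + F 0) := by
  have := F_rec 0 (le_refl 0)
  rw [if_pos rfl, map_one] at this
  rw [show (0 : ℤ) + 1 = 1 by ring, show (0 : ℤ) - 1 = -1 by ring, F_neg, add_zero] at this
  exact this

/-- The "first passage" discrepancy series. -/
noncomputable def G (h : ℤ) : PowerSeries ℤ := F (h + 1) - X * F 0 * F h

lemma G_rec0 : G 0 = X * (G 1 + G 0) := by
  have r1 : F 1 = X * (F 2 + F 1 + F 0) := by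
    have := F_rec' 1 le_rfl
    rw [show (1 : ℤ) + 1 = 2 by ring, show (1 : ℤ) - 1 = 0 by ring] at this
    exact this
  have r0 := F_rec0
  simp only [G, show (0 : ℤ) + 1 = 1 by ring, show (1 : ℤ) + 1 = 2 by ring]
  linear_combination r1 - (X * F 0) * r0

lemma G_recS (h : ℤ) (hh : 1 ≤ h) : G h = X * (G (h + 1) + G h + G (h - 1)) := by
  have r1 : F (h + 1) = X * (F (h + 2) + F (h + 1) + F h) := by
    have := F_rec' (h + 1) (by linarith)
    rw [show h + 1 + 1 = h + 2 by ring, show h + 1 - 1 = h by ring] at this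
    exact this
  have r0 := F_rec' h hh
  simp only [G, show h + 1 + 1 = h + 2 by ring, show h - 1 + 1 = h by ring]
  linear_combination r1 - (X * F 0) * r0

lemma G_eq_zero (h : ℤ) (hh : 0 ≤ h) : G h = 0 := by
  have main : ∀ k : ℕ, ∀ h : ℤ, 0 ≤ h → (coeff k) (G h) = 0 := by
    intro k
    induction k with
    | zero =>
      intro h hh
      have h1 : (coeff 0) (F (h + 1)) = 0 := by
        rw [F, coeff_mk, c_zero, if_neg (by omega)]; norm_num
      have h2 : (coeff 0) (X * F 0 * F h) = 0 := by
        simp [coeff_zero_eq_constantCoeff, map_mul]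
      rw [G, map_sub, h1, h2, sub_zero]
    | succ n ih =>
      intro h hh
      rcases eq_or_lt_of_le hh with h0 | h1
      · rw [← h0, G_rec0, coeff_succ_X_mul, map_add, ih 1 (by norm_num),
          ih 0 (le_refl 0), add_zero]
      · rw [G_recS h h1, coeff_succ_X_mul, map_add, map_add, ih (h + 1) (by linarith),
          ih h (by linarith), ih (h - 1) (by omega)]
        ring
  ext k
  rw [main k h hh, map_zero]

lemma F1_eq : F 1 = X * F 0 * F 0 := by
  have := G_eq_zero 0 (le_refl 0)
  rw [G, show (0 : ℤ) + 1 = 1 by ring, sub_eq_zero] at this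
  exact this

lemma count_eq (k : ℕ) : motzkinCount k 0 = c k 0 := by
  rw [motzkinCount, c]
  apply congrArg Finset.card
  apply Finset.filter_congr
  intro a _
  unfold P
  rw [ps_length]
  constructor
  · rintro ⟨hs, ht⟩
    exact ⟨fun s hsk => by simpa [ps] using hs s hsk, by simpa using ht⟩
  · rintro ⟨hs, ht⟩
    exact ⟨fun s hsk => by simpa [ps] using hs s hsk, by simpa using ht⟩

end MotzkinAux

theorem motzkin_generating_function :
    (PowerSeries.mk fun n => (motzkinCount n 0 : ℤ)) =
      1 + PowerSeries.X * (PowerSeries.mk fun n => (motzkinCount n 0 : ℤ)) +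
        PowerSeries.X ^ 2 * (PowerSeries.mk fun n => (motzkinCount n 0 : ℤ)) ^ 2 := by
  open MotzkinAux PowerSeries in
  have hF : (PowerSeries.mk fun n => (motzkinCount n 0 : ℤ)) = F 0 := by
    ext n
    simp [F, coeff_mk, count_eq]
  rw [hF]
  have r0 := F_rec0
  have r1 := F1_eq
  linear_combination r0 + X * r1
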